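/- arXiv:1805.08981 — 2 statements merged into one kernel-verified Lean document; each statement's English description precedes it below -/
import Mathlib

section
/- Let H be a real inner product space, W a real vector space, and B : (H × W) → (H × W) → ℝ a symmetric bilinear form. Let λ, λ_h ∈ ℝ and let (u,p), (u_h,p_h) ∈ H × W with u_h ≠ 0. Assume B((u,p),(u,p)) = λ‖u‖², B((u,p),(u_h,p_h)) = λ⟨u,u_h⟩, and in addition the discrete eigenvalue relation B((u_h,p_h),(u_h,p_h)) = λ_h‖u_h‖². Then λ_h − λ = ( B((u−u_h, p−p_h),(u−u_h, p−p_h)) − λ‖u−u_h‖² ) / ‖u_h‖². -/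
open scoped RealInnerProductSpace

theorem LinearMap.apply_sub_sub_of_symm {R M : Type*} [CommRing R] [AddCommGroup M] [Module R M]
    (B : M →ₗ[R] M →ₗ[R] R) (hB : ∀ x y, B x y = B y x) (x y : M) :
    B (x - y) (x - y) = B x x - 2 * B x y + B y y := by
  simp only [map_sub, LinearMap.sub_apply, hB y x]
  ring

/-- Eigenvalue error representation from the Rayleigh quotient identity. -/
theorem eigenvalue_error_representation
    {H : Type*} [NormedAddCommGroup H] [InnerProductSpace ℝ H]
    {W : Type*} [AddCommGroup W] [Module ℝ W]
    (B : (H × W) →ₗ[ℝ] (H × W) →ₗ[ℝ] ℝ)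
    (hBsymm : ∀ x y : H × W, B x y = B y x)
    (lam lam_h : ℝ) (u u_h : H) (p p_h : W)
    (hu_h : u_h ≠ 0)
    (hcont : B (u, p) (u, p) = lam * ‖u‖ ^ 2)
    (hconsist : B (u, p) (u_h, p_h) = lam * ⟪u, u_h⟫)
    (hdisc : B (u_h, p_h) (u_h, p_h) = lam_h * ‖u_h‖ ^ 2) :
    lam_h - lam =
      (B (u - u_h, p - p_h) (u - u_h, p - p_h) - lam * ‖u - u_h‖ ^ 2) / ‖u_h‖ ^ 2 := by
  have key : B (u - u_h, p - p_h) (u - u_h, p - p_h) - lam * ‖u - u_h‖ ^ 2 =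
      (lam_h - lam) * ‖u_h‖ ^ 2 := by
    rw [← Prod.mk_sub_mk, B.apply_sub_sub_of_symm hBsymm, hcont, hconsist, hdisc,
      norm_sub_sq_real]
    ring
  rw [key, mul_div_cancel_right₀ _ (pow_ne_zero 2 (norm_ne_zero_iff.mpr hu_h))]
end

section
/- Let X and Y be real normed spaces, let ν > 0, C > 0, C_Ω > 0 be real numbers, and let A : (X × Y) → (X × Y) → ℝ be a bilinear form. Fix (u,p) ∈ X × Y and assume: (i) A((u,p),(u,−p)) ≥ ‖u‖_X²; (ii) there exists w ∈ X with ‖w‖_X ≤ ν^{−1/2}‖p‖_Y and A((u,p),(w,0)) ≥ C_Ω ν^{−1}‖p‖_Y² − C‖u‖_X‖w‖_X. Then there exists a pair (v,q) ∈ X × Y such that A((u,p),(v,q)) ≥ min{1/2, C_Ω²/(8C²)} · (‖u‖_X² + ν^{−1}‖p‖_Y²) and ‖v‖_X² + ν^{−1}‖q‖_Y² ≤ max{2, 1 + C_Ω²/(8C⁴)} · (‖u‖_X² + ν^{−1}‖p‖_Y²); indeed one may take v = u + (C_Ω/(4C²)) w and q = −p. -/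
/-!
Test against `(v, q) = (u + κ w, -p)` with `κ = C_Ω / (4 C²)`. With `y = ν^{-1/2} ‖p‖`,
bilinearity gives `A((u,p),(v,q)) ≥ ‖u‖² + κ C_Ω y² - κ C ‖u‖ y`, and Young's inequality
`κ C ‖u‖ y ≤ ‖u‖²/2 + (κ C)² y²/2` absorbs the cross term, since `(κ C)² = κ C_Ω / 4`.
The norm bound is just `‖u + κ w‖² ≤ 2 ‖u‖² + 2 κ² y²`.
-/

lemma LinearMap.map_add_smul_fst {R X Y M : Type*} [CommSemiring R] [AddCommMonoid X]
    [Module R X] [AddCommMonoid Y] [Module R Y] [AddCommMonoid M] [Module R M]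
    (f : X × Y →ₗ[R] M) (u w : X) (q : Y) (c : R) :
    f (u + c • w, q) = f (u, q) + c • f (w, 0) := by
  rw [← map_smul, ← map_add, Prod.smul_mk, smul_zero, Prod.mk_add_mk, add_zero]

lemma min_mul_add_le_add_mul {a b s t : ℝ} (hs : 0 ≤ s) (ht : 0 ≤ t) :
    min a b * (s + t) ≤ a * s + b * t := by
  rw [mul_add]
  gcongr
  exacts [min_le_left a b, min_le_right a b]

lemma add_mul_le_max_mul_add {a b s t : ℝ} (hs : 0 ≤ s) (ht : 0 ≤ t) :
    a * s + b * t ≤ max a b * (s + t) := by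
  rw [mul_add]
  gcongr
  exacts [le_max_left a b, le_max_right a b]

lemma inv_sqrt_mul_sq {ν : ℝ} (hν : 0 ≤ ν) (r : ℝ) : ((√ν)⁻¹ * r) ^ 2 = ν⁻¹ * r ^ 2 := by
  rw [mul_pow, inv_pow, Real.sq_sqrt hν]

lemma norm_add_smul_sq_le {X : Type*} [SeminormedAddCommGroup X] [NormedSpace ℝ X]
    {u w : X} {y : ℝ} (hw : ‖w‖ ≤ y) (c : ℝ) :
    ‖u + c • w‖ ^ 2 ≤ 2 * ‖u‖ ^ 2 + 2 * c ^ 2 * y ^ 2 := by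
  calc ‖u + c • w‖ ^ 2 ≤ (‖u‖ + |c| * y) ^ 2 := by
        gcongr
        calc ‖u + c • w‖ ≤ ‖u‖ + ‖c • w‖ := norm_add_le u _
          _ ≤ ‖u‖ + |c| * y := by rw [norm_smul, Real.norm_eq_abs]; gcongr
    _ ≤ 2 * (‖u‖ ^ 2 + (|c| * y) ^ 2) := add_sq_le
    _ = 2 * ‖u‖ ^ 2 + 2 * c ^ 2 * y ^ 2 := by rw [mul_pow, sq_abs]; ring

lemma stability_lower_bound {C C_Ω x y t a b : ℝ} (hC : 0 < C) (hCΩ : 0 ≤ C_Ω) (hx : 0 ≤ x)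
    (ht : t ≤ y) (ha : x ^ 2 ≤ a) (hb : C_Ω * y ^ 2 - C * x * t ≤ b) :
    min (1 / 2) (C_Ω ^ 2 / (8 * C ^ 2)) * (x ^ 2 + y ^ 2) ≤ a + C_Ω / (4 * C ^ 2) * b := by
  set k := C_Ω / (4 * C) with hk
  have hcoef : C_Ω ^ 2 / (8 * C ^ 2) = 2 * k ^ 2 := by rw [hk]; field_simp; ring
  have hcross : 4 * k ^ 2 * y ^ 2 - k * x * y ≤ C_Ω / (4 * C ^ 2) * b :=
    calc 4 * k ^ 2 * y ^ 2 - k * x * y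
        = C_Ω / (4 * C ^ 2) * (C_Ω * y ^ 2 - C * x * y) := by rw [hk]; field_simp
      _ ≤ C_Ω / (4 * C ^ 2) * b := by
        gcongr
        exact hb.trans' (by gcongr)
  have young : 2 * x * (k * y) ≤ x ^ 2 + (k * y) ^ 2 := two_mul_le_add_sq _ _
  calc min (1 / 2) (C_Ω ^ 2 / (8 * C ^ 2)) * (x ^ 2 + y ^ 2)
      ≤ 1 / 2 * x ^ 2 + 2 * k ^ 2 * y ^ 2 := by
        rw [← hcoef]
        exact min_mul_add_le_add_mul (sq_nonneg x) (sq_nonneg y)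
    _ ≤ a + C_Ω / (4 * C ^ 2) * b := by linarith [sq_nonneg (k * y)]

/-- Abstract stability property (Lemma 4.1). -/
theorem dg_stability
    {X : Type*} [NormedAddCommGroup X] [NormedSpace ℝ X]
    {Y : Type*} [NormedAddCommGroup Y] [NormedSpace ℝ Y]
    (ν C C_Ω : ℝ) (hν : 0 < ν) (hC : 0 < C) (hCΩ : 0 < C_Ω)
    (A : (X × Y) →ₗ[ℝ] (X × Y) →ₗ[ℝ] ℝ)
    (u : X) (p : Y)
    (hcoer : A (u, p) (u, -p) ≥ ‖u‖ ^ 2)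
    (hw : ∃ w : X, ‖w‖ ≤ (Real.sqrt ν)⁻¹ * ‖p‖ ∧
      A (u, p) (w, 0) ≥ C_Ω * ν⁻¹ * ‖p‖ ^ 2 - C * ‖u‖ * ‖w‖) :
    ∃ (v : X) (q : Y),
      A (u, p) (v, q) ≥
        min (1 / 2) (C_Ω ^ 2 / (8 * C ^ 2)) * (‖u‖ ^ 2 + ν⁻¹ * ‖p‖ ^ 2) ∧
      ‖v‖ ^ 2 + ν⁻¹ * ‖q‖ ^ 2 ≤
        max 2 (1 + C_Ω ^ 2 / (8 * C ^ 4)) * (‖u‖ ^ 2 + ν⁻¹ * ‖p‖ ^ 2) ∧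
      (∃ w : X, ‖w‖ ≤ (Real.sqrt ν)⁻¹ * ‖p‖ ∧
        A (u, p) (w, 0) ≥ C_Ω * ν⁻¹ * ‖p‖ ^ 2 - C * ‖u‖ * ‖w‖ ∧
        v = u + (C_Ω / (4 * C ^ 2)) • w ∧ q = -p) := by
  obtain ⟨w, hwp, hAw⟩ := hw
  set κ := C_Ω / (4 * C ^ 2)
  set y := (√ν)⁻¹ * ‖p‖
  have hy : ν⁻¹ * ‖p‖ ^ 2 = y ^ 2 := (inv_sqrt_mul_sq hν.le _).symm
  refine ⟨u + κ • w, -p, ?_, ?_, w, hwp, hAw, rfl, rfl⟩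
  · rw [LinearMap.map_add_smul_fst, smul_eq_mul, hy]
    rw [mul_assoc, hy] at hAw
    exact stability_lower_bound hC hCΩ.le (norm_nonneg u) hwp hcoer hAw
  · rw [norm_neg, hy]
    calc ‖u + κ • w‖ ^ 2 + y ^ 2 ≤ 2 * ‖u‖ ^ 2 + 2 * κ ^ 2 * y ^ 2 + y ^ 2 := by
          gcongr
          exact norm_add_smul_sq_le hwp κ
      _ = 2 * ‖u‖ ^ 2 + (1 + C_Ω ^ 2 / (8 * C ^ 4)) * y ^ 2 := by ring
      _ ≤ max 2 (1 + C_Ω ^ 2 / (8 * C ^ 4)) * (‖u‖ ^ 2 + y ^ 2) :=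
          add_mul_le_max_mul_add (sq_nonneg _) (sq_nonneg _)
end
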